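/- Structure preserving bisimilarity is a congruence for the CCSP parallel composition of nets: if N₁ˡ ≈sp N₂ˡ and N₁ʳ ≈sp N₂ʳ, then N₁ˡ ∥_𝒩 N₁ʳ ≈sp N₂ˡ ∥_𝒩 N₂ʳ. -/

import Mathlib

open scoped Classical

/-- A typed Petri net over the action alphabet `Act`.  The flow relation (with arc
weights) is presented through the pre- and post-multisets of each transition. -/
structure PetriNet (Act : Type) : Type 1 where
  Plc : Type
  Tr : Type
  pre : Tr → Multiset Plc
  post : Tr → Multiset Plc
  M0 : Multiset Plc
  typ : Set Act
  lbl : Tr → Act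
  lbl_mem : ∀ t, lbl t ∈ typ

namespace PetriNet

variable {Act : Type}

/-- `M [t⟩ M'`: transition `t` is enabled at the marking `M` and firing it yields `M'`. -/
def fires (N : PetriNet Act) (M : Multiset N.Plc) (t : N.Tr) (M' : Multiset N.Plc) : Prop :=
  N.pre t ≤ M ∧ M' = M - N.pre t + N.post t

/-- The markings reachable from the initial marking (i.e. occurring in some path). -/
inductive Reachable (N : PetriNet Act) : Multiset N.Plc → Prop
  | init : Reachable N N.M0
  | step {M : Multiset N.Plc} {t : N.Tr} {M' : Multiset N.Plc} :
      Reachable N M → N.fires M t M' → Reachable N M'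

/-- Bounded parallelism: no reachable marking `M` admits an infinite multiset `U` of
transitions with `∑_{t ∈ U} •t ≤ M`. -/
def BoundedParallelism (N : PetriNet Act) : Prop :=
  ¬ ∃ (M : Multiset N.Plc) (U : N.Tr → ℕ), N.Reachable M ∧
      (Function.support U).Infinite ∧
      ∀ F : Finset N.Tr, (∑ t ∈ F, U t • N.pre t) ≤ M

/-- A net is safe if every reachable marking is a plain set. -/
def Safe (N : PetriNet Act) : Prop := ∀ M, N.Reachable M → M.Nodup

end PetriNet

/-- A linking between two nets: a multiset of links, i.e. of pairs of places. -/
abbrev Linking {Act : Type} (N₁ N₂ : PetriNet Act) : Type := Multiset (N₁.Plc × N₂.Plc)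

/-- First projection of a linking: the induced marking of the first net. -/
def Linking.proj1 {Act : Type} {N₁ N₂ : PetriNet Act} (l : Linking N₁ N₂) :
    Multiset N₁.Plc := l.map Prod.fst

/-- Second projection of a linking: the induced marking of the second net. -/
def Linking.proj2 {Act : Type} {N₁ N₂ : PetriNet Act} (l : Linking N₁ N₂) :
    Multiset N₂.Plc := l.map Prod.snd

/-- `B` is a structure preserving bisimulation between `N₁` and `N₂`. -/
def IsSPBisim {Act : Type} (N₁ N₂ : PetriNet Act) (B : Set (Linking N₁ N₂)) : Prop :=
  (∀ c l : Linking N₁ N₂, l ∈ B → c ≤ l → ∀ t₁ : N₁.Tr, c.proj1 = N₁.pre t₁ →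
      ∃ t₂ : N₂.Tr, N₂.lbl t₂ = N₁.lbl t₁ ∧ c.proj2 = N₂.pre t₂ ∧
        ∃ cbar : Linking N₁ N₂, cbar.proj1 = N₁.post t₁ ∧ cbar.proj2 = N₂.post t₂ ∧
          l - c + cbar ∈ B) ∧
  (∀ c l : Linking N₁ N₂, l ∈ B → c ≤ l → ∀ t₂ : N₂.Tr, c.proj2 = N₂.pre t₂ →
      ∃ t₁ : N₁.Tr, N₁.lbl t₁ = N₂.lbl t₂ ∧ c.proj1 = N₁.pre t₁ ∧
        ∃ cbar : Linking N₁ N₂, cbar.proj1 = N₁.post t₁ ∧ cbar.proj2 = N₂.post t₂ ∧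
          l - c + cbar ∈ B)

/-- Structure preserving bisimilarity `N₁ ≈sp N₂`. -/
def SPBisimilar {Act : Type} (N₁ N₂ : PetriNet Act) : Prop :=
  N₁.typ = N₂.typ ∧ ∃ B : Set (Linking N₁ N₂), IsSPBisim N₁ N₂ B ∧
    ∃ l ∈ B, l.proj1 = N₁.M0 ∧ l.proj2 = N₂.M0

/-- The candidate transitions of `N₁ ∥_𝒩 N₂` that survive: unsynchronised transitions
of either component with label outside `A₁ ∩ A₂`, and synchronising pairs. -/
def parTrProp {Act : Type} (N₁ N₂ : PetriNet Act) :
    N₁.Tr ⊕ N₂.Tr ⊕ N₁.Tr × N₂.Tr → Prop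
  | Sum.inl t₁ => N₁.lbl t₁ ∉ N₁.typ ∩ N₂.typ
  | Sum.inr (Sum.inl t₂) => N₂.lbl t₂ ∉ N₁.typ ∩ N₂.typ
  | Sum.inr (Sum.inr p) => N₁.lbl p.1 = N₂.lbl p.2 ∧ N₁.lbl p.1 ∈ N₁.typ ∩ N₂.typ

/-- Presets in the parallel composition. -/
def parPre {Act : Type} (N₁ N₂ : PetriNet Act) :
    N₁.Tr ⊕ N₂.Tr ⊕ N₁.Tr × N₂.Tr → Multiset (N₁.Plc ⊕ N₂.Plc)
  | Sum.inl t₁ => (N₁.pre t₁).map Sum.inl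
  | Sum.inr (Sum.inl t₂) => (N₂.pre t₂).map Sum.inr
  | Sum.inr (Sum.inr p) => (N₁.pre p.1).map Sum.inl + (N₂.pre p.2).map Sum.inr

/-- Postsets in the parallel composition. -/
def parPost {Act : Type} (N₁ N₂ : PetriNet Act) :
    N₁.Tr ⊕ N₂.Tr ⊕ N₁.Tr × N₂.Tr → Multiset (N₁.Plc ⊕ N₂.Plc)
  | Sum.inl t₁ => (N₁.post t₁).map Sum.inl
  | Sum.inr (Sum.inl t₂) => (N₂.post t₂).map Sum.inr
  | Sum.inr (Sum.inr p) => (N₁.post p.1).map Sum.inl + (N₂.post p.2).map Sum.inr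

/-- Labels in the parallel composition. -/
def parLbl {Act : Type} (N₁ N₂ : PetriNet Act) :
    N₁.Tr ⊕ N₂.Tr ⊕ N₁.Tr × N₂.Tr → Act
  | Sum.inl t₁ => N₁.lbl t₁
  | Sum.inr (Sum.inl t₂) => N₂.lbl t₂
  | Sum.inr (Sum.inr p) => N₁.lbl p.1

/-- The CCSP parallel composition `N₁ ∥_𝒩 N₂` of two nets. -/
def parNet {Act : Type} (N₁ N₂ : PetriNet Act) : PetriNet Act where
  Plc := N₁.Plc ⊕ N₂.Plc
  Tr := {x : N₁.Tr ⊕ N₂.Tr ⊕ N₁.Tr × N₂.Tr // parTrProp N₁ N₂ x}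
  pre := fun t => parPre N₁ N₂ t.val
  post := fun t => parPost N₁ N₂ t.val
  M0 := N₁.M0.map Sum.inl + N₂.M0.map Sum.inr
  typ := N₁.typ ∪ N₂.typ
  lbl := fun t => parLbl N₁ N₂ t.val
  lbl_mem := by
    rintro ⟨x, hx⟩
    rcases x with t₁ | t₂ | p
    · exact Set.mem_union_left _ (N₁.lbl_mem t₁)
    · exact Set.mem_union_right _ (N₂.lbl_mem t₂)
    · exact Set.mem_union_left _ (N₁.lbl_mem p.1)

/-!
Given sp-bisimulations `Bl` and `Br` for the two components, the linkings of the composite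
that link left places by a linking of `Bl` and right places by a linking of `Br` form an
sp-bisimulation. A sub-linking of such a linking splits into a left and a right part, and a
transition of the composite is an unsynchronised transition of one component, matched there
while the other component idles, or a synchronising pair, matched componentwise; since the
components have the same types, the synchronisation condition is preserved. The backward
clause is the forward clause for the swapped linkings.
-/

namespace Multiset

variable {α β : Type*}

theorem exists_eq_add_of_le_add [DecidableEq α] {c a b : Multiset α} (h : c ≤ a + b) :
    ∃ a' ≤ a, ∃ b' ≤ b, c = a' + b' := by
  refine ⟨c ∩ a, inter_le_right .., c - c ∩ a, ?_,
    (add_tsub_cancel_of_le (inter_le_left ..)).symm⟩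
  rw [le_iff_count] at h ⊢
  intro x
  have := h x
  simp only [count_sub, count_inter, count_add] at *
  omega

theorem exists_eq_map_of_le_map {f : α → β} (hf : f.Injective) {c : Multiset β}
    {s : Multiset α} (h : c ≤ s.map f) : ∃ c' ≤ s, c = c'.map f := by
  rcases isEmpty_or_nonempty α with hα | hα
  · exact ⟨0, zero_le _, by simpa [Subsingleton.elim s 0] using h⟩
  have hc : c.map (f ∘ Function.invFun f) = c := by
    refine (map_congr rfl fun b hb => ?_).trans c.map_id
    obtain ⟨a, -, rfl⟩ := mem_map.1 (mem_of_le h hb)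
    exact Function.invFun_eq ⟨a, rfl⟩
  refine ⟨c.map (Function.invFun f), ?_, by rw [map_map, hc]⟩
  rwa [← map_le_map_iff hf, map_map, hc]

@[simp]
theorem filterMap_const_none (s : Multiset α) :
    s.filterMap (fun _ => (none : Option β)) = 0 := by
  induction s using Multiset.induction <;> simp_all

theorem disjSum_inj {s₁ s₂ : Multiset α} {t₁ t₂ : Multiset β} :
    s₁.disjSum t₁ = s₂.disjSum t₂ ↔ s₁ = s₂ ∧ t₁ = t₂ := by
  refine ⟨fun h => ⟨?_, ?_⟩, fun h => h.1 ▸ h.2 ▸ rfl⟩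
  · simpa [disjSum, filterMap_add, filterMap_map, Function.comp_def]
      using congrArg (filterMap Sum.getLeft?) h
  · simpa [disjSum, filterMap_add, filterMap_map, Function.comp_def]
      using congrArg (filterMap Sum.getRight?) h

end Multiset

section ParNet

variable {Act : Type} {N₁ N₂ : PetriNet Act}

@[simp]
theorem parNet_pre_mk (x) (h : parTrProp N₁ N₂ x) :
    (parNet N₁ N₂).pre ⟨x, h⟩ = parPre N₁ N₂ x :=
  rfl

@[simp]
theorem parNet_post_mk (x) (h : parTrProp N₁ N₂ x) :
    (parNet N₁ N₂).post ⟨x, h⟩ = parPost N₁ N₂ x :=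
  rfl

theorem parPre_inl (t : N₁.Tr) : parPre N₁ N₂ (.inl t) = (N₁.pre t).disjSum 0 :=
  (Multiset.disjSum_zero _).symm

theorem parPre_inr_inl (t : N₂.Tr) :
    parPre N₁ N₂ (.inr (.inl t)) = (0 : Multiset _).disjSum (N₂.pre t) :=
  (Multiset.zero_disjSum _).symm

theorem parPre_inr_inr (p : N₁.Tr × N₂.Tr) :
    parPre N₁ N₂ (.inr (.inr p)) = (N₁.pre p.1).disjSum (N₂.pre p.2) :=
  rfl

theorem parPost_inl (t : N₁.Tr) : parPost N₁ N₂ (.inl t) = (N₁.post t).disjSum 0 :=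
  (Multiset.disjSum_zero _).symm

theorem parPost_inr_inl (t : N₂.Tr) :
    parPost N₁ N₂ (.inr (.inl t)) = (0 : Multiset _).disjSum (N₂.post t) :=
  (Multiset.zero_disjSum _).symm

theorem parPost_inr_inr (p : N₁.Tr × N₂.Tr) :
    parPost N₁ N₂ (.inr (.inr p)) = (N₁.post p.1).disjSum (N₂.post p.2) :=
  rfl

end ParNet

namespace Linking

variable {Act : Type} {N₁ N₂ N₁l N₁r N₂l N₂r : PetriNet Act}

def swap (l : Linking N₁ N₂) : Linking N₂ N₁ := l.map Prod.swap

@[simp]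
theorem swap_swap (l : Linking N₁ N₂) : l.swap.swap = l := by
  simp [swap]

@[simp]
theorem proj1_swap (l : Linking N₁ N₂) : l.swap.proj1 = l.proj2 := by
  simp [swap, proj1, proj2]

@[simp]
theorem proj2_swap (l : Linking N₁ N₂) : l.swap.proj2 = l.proj1 := by
  simp [swap, proj1, proj2]

@[simp]
theorem proj1_zero : (0 : Linking N₁ N₂).proj1 = 0 :=
  rfl

@[simp]
theorem proj2_zero : (0 : Linking N₁ N₂).proj2 = 0 :=
  rfl

theorem swap_le_swap {c l : Linking N₁ N₂} (h : c ≤ l) : c.swap ≤ l.swap :=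
  Multiset.map_le_map h

theorem swap_sub_add {c l : Linking N₁ N₂} (h : c ≤ l) (cbar : Linking N₁ N₂) :
    (l - c + cbar).swap = l.swap - c.swap + cbar.swap := by
  obtain ⟨l', rfl⟩ := exists_add_of_le h
  simp [swap]

def par (ll : Linking N₁l N₂l) (lr : Linking N₁r N₂r) :
    Linking (parNet N₁l N₁r) (parNet N₂l N₂r) :=
  ll.map (Prod.map Sum.inl Sum.inl) + lr.map (Prod.map Sum.inr Sum.inr)

@[simp]
theorem proj1_par (ll : Linking N₁l N₂l) (lr : Linking N₁r N₂r) :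
    (par ll lr).proj1 = ll.proj1.disjSum lr.proj1 := by
  simp [par, proj1, Multiset.disjSum, parNet]

@[simp]
theorem proj2_par (ll : Linking N₁l N₂l) (lr : Linking N₁r N₂r) :
    (par ll lr).proj2 = ll.proj2.disjSum lr.proj2 := by
  simp [par, proj2, Multiset.disjSum, parNet]

theorem swap_par (ll : Linking N₁l N₂l) (lr : Linking N₁r N₂r) :
    (par ll lr).swap = par ll.swap lr.swap := by
  simp only [par, swap, parNet, Multiset.map_add, Multiset.map_map, Prod.map_comp_swap]

theorem par_add (ll ll' : Linking N₁l N₂l) (lr lr' : Linking N₁r N₂r) :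
    par (ll + ll') (lr + lr') = par ll lr + par ll' lr' := by
  simp only [par, Multiset.map_add]
  abel

theorem par_sub_add {cl ll : Linking N₁l N₂l} {cr lr : Linking N₁r N₂r} (hl : cl ≤ ll)
    (hr : cr ≤ lr) (cbarl : Linking N₁l N₂l) (cbarr : Linking N₁r N₂r) :
    par ll lr - par cl cr + par cbarl cbarr = par (ll - cl + cbarl) (lr - cr + cbarr) := by
  obtain ⟨ll', rfl⟩ := exists_add_of_le hl
  obtain ⟨lr', rfl⟩ := exists_add_of_le hr
  simp only [par_add, add_tsub_cancel_left]

theorem exists_eq_par_of_le_par {c : Linking (parNet N₁l N₁r) (parNet N₂l N₂r)}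
    {ll : Linking N₁l N₂l} {lr : Linking N₁r N₂r} (h : c ≤ par ll lr) :
    ∃ cl ≤ ll, ∃ cr ≤ lr, c = par cl cr := by
  obtain ⟨c₁, hc₁, c₂, hc₂, rfl⟩ := Multiset.exists_eq_add_of_le_add h
  obtain ⟨cl, hcl, rfl⟩ :=
    Multiset.exists_eq_map_of_le_map (Sum.inl_injective.prodMap Sum.inl_injective) hc₁
  obtain ⟨cr, hcr, rfl⟩ :=
    Multiset.exists_eq_map_of_le_map (Sum.inr_injective.prodMap Sum.inr_injective) hc₂
  exact ⟨cl, hcl, cr, hcr, rfl⟩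

theorem preimage_swap_image2_par (Bl : Set (Linking N₁l N₂l)) (Br : Set (Linking N₁r N₂r)) :
    swap ⁻¹' Set.image2 par Bl Br = Set.image2 par (swap ⁻¹' Bl) (swap ⁻¹' Br) := by
  ext l
  constructor
  · rintro ⟨ll, hll, lr, hlr, h⟩
    refine ⟨ll.swap, by simpa using hll, lr.swap, by simpa using hlr, ?_⟩
    rw [← swap_par, h, swap_swap]
  · rintro ⟨ll, hll, lr, hlr, rfl⟩
    exact ⟨_, hll, _, hlr, (swap_par ll lr).symm⟩

end Linking

section Bisimulation

variable {Act : Type}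

def SPMatches {N₁ N₂ : PetriNet Act} (B : Set (Linking N₁ N₂)) (l c : Linking N₁ N₂)
    (t₁ : N₁.Tr) : Prop :=
  ∃ t₂ : N₂.Tr, N₂.lbl t₂ = N₁.lbl t₁ ∧ c.proj2 = N₂.pre t₂ ∧
    ∃ cbar : Linking N₁ N₂, cbar.proj1 = N₁.post t₁ ∧ cbar.proj2 = N₂.post t₂ ∧
      l - c + cbar ∈ B

def IsSPSim (N₁ N₂ : PetriNet Act) (B : Set (Linking N₁ N₂)) : Prop :=
  ∀ c l : Linking N₁ N₂, l ∈ B → c ≤ l → ∀ t₁ : N₁.Tr, c.proj1 = N₁.pre t₁ →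
    SPMatches B l c t₁

theorem isSPBisim_iff {N₁ N₂ : PetriNet Act} {B : Set (Linking N₁ N₂)} :
    IsSPBisim N₁ N₂ B ↔ IsSPSim N₁ N₂ B ∧ IsSPSim N₂ N₁ (Linking.swap ⁻¹' B) := by
  refine and_congr_right' ⟨fun h c l hl hc t₂ hpre => ?_, fun h c l hl hc t₂ hpre => ?_⟩
  · obtain ⟨t₁, hlbl, hpre₁, cbar, hpost₁, hpost₂, hmem⟩ :=
      h c.swap l.swap hl (Linking.swap_le_swap hc) t₂ (by simpa using hpre)
    refine ⟨t₁, hlbl, by simpa using hpre₁, cbar.swap, by simpa, by simpa, ?_⟩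
    simpa [Linking.swap_sub_add hc] using hmem
  · obtain ⟨t₁, hlbl, hpre₁, cbar, hpost₂, hpost₁, hmem⟩ :=
      h c.swap l.swap (by simpa using hl) (Linking.swap_le_swap hc) t₂ (by simpa using hpre)
    refine ⟨t₁, hlbl, by simpa using hpre₁, cbar.swap, by simpa, by simpa, ?_⟩
    simpa [Linking.swap_sub_add (Linking.swap_le_swap hc)] using hmem

variable {N₁l N₁r N₂l N₂r : PetriNet Act} {Bl : Set (Linking N₁l N₂l)}
  {Br : Set (Linking N₁r N₂r)}

theorem SPMatches.par_left (htl : N₁l.typ = N₂l.typ) (htr : N₁r.typ = N₂r.typ)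
    {ll cl : Linking N₁l N₂l} {lr : Linking N₁r N₂r} {t₁ : N₁l.Tr}
    (h : SPMatches Bl ll cl t₁) (hcl : cl ≤ ll) (hlr : lr ∈ Br)
    (ht : parTrProp N₁l N₁r (.inl t₁)) :
    SPMatches (Set.image2 Linking.par Bl Br) (.par ll lr) (.par cl 0) ⟨.inl t₁, ht⟩ := by
  obtain ⟨t₂, hlbl, hpre₂, cbar, hpost₁, hpost₂, hmem⟩ := h
  have ht₂ : parTrProp N₂l N₂r (.inl t₂) := by simpa [parTrProp, hlbl, htl, htr] using ht
  refine ⟨⟨.inl t₂, ht₂⟩, hlbl, ?_, .par cbar 0, ?_, ?_, ?_⟩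
  -- Not `simp`: these equations live in `Multiset (parNet _ _).Plc`, which is `Multiset (_ ⊕ _)`
  -- only after unfolding `parNet`, so only `rfl` closes the final syntactic equality.
  · rw [Linking.proj2_par, Linking.proj2_zero, hpre₂, parNet_pre_mk, parPre_inl]
  · rw [Linking.proj1_par, Linking.proj1_zero, hpost₁, parNet_post_mk, parPost_inl]
  · rw [Linking.proj2_par, Linking.proj2_zero, hpost₂, parNet_post_mk, parPost_inl]
  · rw [Linking.par_sub_add hcl zero_le]
    exact Set.mem_image2_of_mem hmem (by simpa using hlr)

theorem SPMatches.par_right (htl : N₁l.typ = N₂l.typ) (htr : N₁r.typ = N₂r.typ)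
    {ll : Linking N₁l N₂l} {lr cr : Linking N₁r N₂r} {t₁ : N₁r.Tr}
    (h : SPMatches Br lr cr t₁) (hcr : cr ≤ lr) (hll : ll ∈ Bl)
    (ht : parTrProp N₁l N₁r (.inr (.inl t₁))) :
    SPMatches (Set.image2 Linking.par Bl Br) (.par ll lr) (.par 0 cr)
      ⟨.inr (.inl t₁), ht⟩ := by
  obtain ⟨t₂, hlbl, hpre₂, cbar, hpost₁, hpost₂, hmem⟩ := h
  have ht₂ : parTrProp N₂l N₂r (.inr (.inl t₂)) := by
    simpa [parTrProp, hlbl, htl, htr] using ht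
  refine ⟨⟨.inr (.inl t₂), ht₂⟩, hlbl, ?_, .par 0 cbar, ?_, ?_, ?_⟩
  · rw [Linking.proj2_par, Linking.proj2_zero, hpre₂, parNet_pre_mk, parPre_inr_inl]
  · rw [Linking.proj1_par, Linking.proj1_zero, hpost₁, parNet_post_mk, parPost_inr_inl]
  · rw [Linking.proj2_par, Linking.proj2_zero, hpost₂, parNet_post_mk, parPost_inr_inl]
  · rw [Linking.par_sub_add zero_le hcr]
    exact Set.mem_image2_of_mem (by simpa using hll) hmem

theorem SPMatches.par_sync (htl : N₁l.typ = N₂l.typ) (htr : N₁r.typ = N₂r.typ)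
    {ll cl : Linking N₁l N₂l} {lr cr : Linking N₁r N₂r} {t₁l : N₁l.Tr} {t₁r : N₁r.Tr}
    (hl : SPMatches Bl ll cl t₁l) (hr : SPMatches Br lr cr t₁r) (hcl : cl ≤ ll) (hcr : cr ≤ lr)
    (ht : parTrProp N₁l N₁r (.inr (.inr (t₁l, t₁r)))) :
    SPMatches (Set.image2 Linking.par Bl Br) (.par ll lr) (.par cl cr)
      ⟨.inr (.inr (t₁l, t₁r)), ht⟩ := by
  obtain ⟨t₂l, hlbll, hpre₂l, cbarl, hpostl₁, hpostl₂, hmeml⟩ := hl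
  obtain ⟨t₂r, hlblr, hpre₂r, cbarr, hpostr₁, hpostr₂, hmemr⟩ := hr
  have ht₂ : parTrProp N₂l N₂r (.inr (.inr (t₂l, t₂r))) := by
    simpa [parTrProp, hlbll, hlblr, htl, htr] using ht
  refine ⟨⟨.inr (.inr (t₂l, t₂r)), ht₂⟩, hlbll, ?_, .par cbarl cbarr, ?_, ?_, ?_⟩
  · rw [Linking.proj2_par, hpre₂l, hpre₂r, parNet_pre_mk, parPre_inr_inr]
  · rw [Linking.proj1_par, hpostl₁, hpostr₁, parNet_post_mk, parPost_inr_inr]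
  · rw [Linking.proj2_par, hpostl₂, hpostr₂, parNet_post_mk, parPost_inr_inr]
  · rw [Linking.par_sub_add hcl hcr]
    exact Set.mem_image2_of_mem hmeml hmemr

theorem IsSPSim.par (htl : N₁l.typ = N₂l.typ) (htr : N₁r.typ = N₂r.typ)
    (hl : IsSPSim N₁l N₂l Bl) (hr : IsSPSim N₁r N₂r Br) :
    IsSPSim (parNet N₁l N₁r) (parNet N₂l N₂r) (Set.image2 Linking.par Bl Br) := by
  rintro _ _ ⟨ll, hll, lr, hlr, rfl⟩ hc ⟨t, ht⟩ hpre
  obtain ⟨cl, hcl, cr, hcr, rfl⟩ := Linking.exists_eq_par_of_le_par hc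
  rw [Linking.proj1_par, parNet_pre_mk] at hpre
  rcases t with t₁ | t₁ | ⟨t₁l, t₁r⟩
  · obtain ⟨hprel, hprer⟩ := Multiset.disjSum_inj.1 (hpre.trans (parPre_inl t₁))
    obtain rfl : cr = 0 := Multiset.map_eq_zero.1 hprer
    exact (hl cl ll hll hcl t₁ hprel).par_left htl htr hcl hlr ht
  · obtain ⟨hprel, hprer⟩ := Multiset.disjSum_inj.1 (hpre.trans (parPre_inr_inl t₁))
    obtain rfl : cl = 0 := Multiset.map_eq_zero.1 hprel
    exact (hr cr lr hlr hcr t₁ hprer).par_right htl htr hcr hll ht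
  · obtain ⟨hprel, hprer⟩ := Multiset.disjSum_inj.1 hpre
    exact (hl cl ll hll hcl t₁l hprel).par_sync htl htr (hr cr lr hlr hcr t₁r hprer) hcl hcr
      ht

theorem IsSPBisim.par (htl : N₁l.typ = N₂l.typ) (htr : N₁r.typ = N₂r.typ)
    (hl : IsSPBisim N₁l N₂l Bl) (hr : IsSPBisim N₁r N₂r Br) :
    IsSPBisim (parNet N₁l N₁r) (parNet N₂l N₂r) (Set.image2 Linking.par Bl Br) := by
  rw [isSPBisim_iff] at hl hr ⊢
  rw [Linking.preimage_swap_image2_par]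
  exact ⟨hl.1.par htl htr hr.1, hl.2.par htl.symm htr.symm hr.2⟩

end Bisimulation

theorem spBisimilar_congr_par_general {Act : Type} (N₁l N₁r N₂l N₂r : PetriNet Act)
    (hl : SPBisimilar N₁l N₂l) (hr : SPBisimilar N₁r N₂r) :
    SPBisimilar (parNet N₁l N₁r) (parNet N₂l N₂r) := by
  obtain ⟨htl, Bl, hBl, l0l, hl0l, hp1l, hp2l⟩ := hl
  obtain ⟨htr, Br, hBr, l0r, hl0r, hp1r, hp2r⟩ := hr
  refine ⟨congrArg₂ (· ∪ ·) htl htr, _, hBl.par htl htr hBr, .par l0l l0r,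
    Set.mem_image2_of_mem hl0l hl0r, ?_, ?_⟩
  · rw [Linking.proj1_par, hp1l, hp1r]
    rfl
  · rw [Linking.proj2_par, hp2l, hp2r]
    rfl

/-- Structure preserving bisimilarity is a congruence for the CCSP parallel composition
of nets. -/
theorem spBisimilar_congr_par {Act : Type} (N₁l N₁r N₂l N₂r : PetriNet Act)
    (h₁l : N₁l.BoundedParallelism) (h₁r : N₁r.BoundedParallelism)
    (h₂l : N₂l.BoundedParallelism) (h₂r : N₂r.BoundedParallelism)
    (hl : SPBisimilar N₁l N₂l) (hr : SPBisimilar N₁r N₂r) :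
    SPBisimilar (parNet N₁l N₁r) (parNet N₂l N₂r) :=
  spBisimilar_congr_par_general N₁l N₁r N₂l N₂r hl hr
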